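/- In the Standard Model finite spectral triple, let B ⊆ End(H) be the image of the representation of ℂ⊕M_3(ℂ)⊕M_4(ℂ)⊕M_4(ℂ) given by π(λ,m,a,b) := (λ⊕m)⊗e_{22}⊗1 + a⊗e_{11}⊗e_{11} + b⊗e_{11}⊗(1−e_{11}), where λ ∈ ℂ, m ∈ M_3(ℂ), a,b ∈ M_4(ℂ), and λ⊕m denotes the 4×4 block-diagonal matrix. Then B and B° commute, and in fact B' = B°. -/

import Mathlib

open scoped ComplexConjugate
open Matrix

/-- The Hilbert space `H = M₄(ℂ) ⊕ M₄(ℂ)` of the finite Standard Model spectral triple,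
with inner product `⟨(v,w),(v',w')⟩ = Tr(v*v') + Tr(w*w')`: it is realized as functions
on `Fin 2 × Fin 4 × Fin 4` (the first index `0`/`1` selecting `v`/`w`) with the standard
inner product. -/
abbrev HSM := EuclideanSpace ℂ (Fin 2 × Fin 4 × Fin 4)

/-- The operator `π(α ⊗ e_{s't'} ⊗ β)` on `HSM`, sending the component `t` to the
component `s` via `u ↦ α u βᵗ` (here `s, t ∈ {0,1}` correspond to the `M₂(ℂ)` matrix unit
`e_{s+1,t+1}`). -/
noncomputable def opE (s t : Fin 2) (α β : Matrix (Fin 4) (Fin 4) ℂ) :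
    HSM →ₗ[ℂ] HSM where
  toFun x := WithLp.toLp 2 (fun p : Fin 2 × Fin 4 × Fin 4 =>
    if p.1 = s then ∑ k, ∑ l, α p.2.1 k * β p.2.2 l * x (t, k, l) else 0)
  map_add' x y := by
    ext p
    by_cases h : p.1 = s <;> simp [h, Finset.sum_add_distrib, mul_add]
  map_smul' c x := by
    ext p
    by_cases h : p.1 = s <;> simp [h, Finset.mul_sum]
    ring_nf
    simp [mul_assoc, mul_comm, mul_left_comm]

/-- The real structure `J(v,w) := (w*, v*)` on `HSM`. -/
noncomputable def JSM : HSM ≃ₛₗ[starRingEnd ℂ] HSM where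
  toFun x := WithLp.toLp 2 (fun p : Fin 2 × Fin 4 × Fin 4 => (starRingEnd ℂ) (x (1 - p.1, p.2.2, p.2.1)))
  invFun x := WithLp.toLp 2 (fun p : Fin 2 × Fin 4 × Fin 4 => (starRingEnd ℂ) (x (1 - p.1, p.2.2, p.2.1)))
  left_inv x := by
    ext p
    obtain ⟨s, i, j⟩ := p
    fin_cases s <;> simp
  right_inv x := by
    ext p
    obtain ⟨s, i, j⟩ := p
    fin_cases s <;> simp
  map_add' x y := by ext p; simp
  map_smul' c x := by ext p; simp

/-- For an antilinear isometry `J` and `ξ ∈ End(H)`, the operator `ξ° := J ξ* J⁻¹`. -/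
noncomputable def sharp (J : HSM ≃ₛₗ[starRingEnd ℂ] HSM) (ξ : HSM →ₗ[ℂ] HSM) :
    HSM →ₗ[ℂ] HSM where
  toFun x := J (star ξ (J.symm x))
  map_add' x y := by simp
  map_smul' c x := by
    show J (star ξ (J.symm (c • x))) = _
    rw [map_smulₛₗ, _root_.map_smul, map_smulₛₗ]; simp

/-- Conjugation `ξ ↦ J ξ J⁻¹` of an operator by the antilinear map `J`. -/
noncomputable def conjJ (J : HSM ≃ₛₗ[starRingEnd ℂ] HSM) (ξ : HSM →ₗ[ℂ] HSM) :
    HSM →ₗ[ℂ] HSM where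
  toFun x := J (ξ (J.symm x))
  map_add' x y := by simp
  map_smul' c x := by
    show J (ξ (J.symm (c • x))) = _
    rw [map_smulₛₗ, _root_.map_smul, map_smulₛₗ]; simp

/-- The commutant of a subset of `End(H)`. -/
def commutant (S : Set (HSM →ₗ[ℂ] HSM)) : Set (HSM →ₗ[ℂ] HSM) :=
  {η | ∀ ξ ∈ S, η * ξ = ξ * η}

/-- `B° := {J ξ* J⁻¹ : ξ ∈ B}`. -/
noncomputable def opp (S : Set (HSM →ₗ[ℂ] HSM)) : Set (HSM →ₗ[ℂ] HSM) :=
  sharp JSM '' S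

/-- `Ω¹_D(A)`: the complex span of `{a[D,b] : a, b ∈ A}`. -/
noncomputable def omega1 (Aset : Set (HSM →ₗ[ℂ] HSM)) (D : HSM →ₗ[ℂ] HSM) :
    Submodule ℂ (HSM →ₗ[ℂ] HSM) :=
  Submodule.span ℂ {x | ∃ a ∈ Aset, ∃ b ∈ Aset, x = a * (D * b - b * D)}

/-- `Cl_D(A)`: the complex `*`-subalgebra of `End(H)` generated by `A` and `Ω¹_D(A)`. -/
noncomputable def cliff (Aset : Set (HSM →ₗ[ℂ] HSM)) (D : HSM →ₗ[ℂ] HSM) :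
    StarSubalgebra ℂ (HSM →ₗ[ℂ] HSM) :=
  StarAlgebra.adjoin ℂ (Aset ∪ (omega1 Aset D : Set (HSM →ₗ[ℂ] HSM)))

/-- The matrix unit `e₁₁ ∈ M₄(ℂ)`. -/
noncomputable def E11 : Matrix (Fin 4) (Fin 4) ℂ :=
  !![1, 0, 0, 0; 0, 0, 0, 0; 0, 0, 0, 0; 0, 0, 0, 0]

/-- The matrix `diag(λ, λ̄) ⊕ q ∈ M₄(ℂ)`, where `q = [[a,b],[-b̄,ā]] ∈ ℍ ⊆ M₂(ℂ)`. -/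
noncomputable def Mlq (l a b : ℂ) : Matrix (Fin 4) (Fin 4) ℂ :=
  !![l, 0, 0, 0;
     0, conj l, 0, 0;
     0, 0, a, b;
     0, 0, -(conj b), conj a]

/-- The matrix `λ ⊕ m ∈ M₄(ℂ)` with `m ∈ M₃(ℂ)`. -/
noncomputable def Mlm (l : ℂ) (m : Matrix (Fin 3) (Fin 3) ℂ) : Matrix (Fin 4) (Fin 4) ℂ :=
  !![l, 0, 0, 0;
     0, m 0 0, m 0 1, m 0 2;
     0, m 1 0, m 1 1, m 1 2;
     0, m 2 0, m 2 1, m 2 2]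

/-- The Standard Model algebra `A ≅ ℂ ⊕ ℍ ⊕ M₃(ℂ)`, acting on `HSM` as
`(diag(λ,λ̄) ⊕ q) ⊗ e₁₁ ⊗ 1 + (λ ⊕ m) ⊗ e₂₂ ⊗ 1`. -/
noncomputable def ASM : Set (HSM →ₗ[ℂ] HSM) :=
  {ξ | ∃ (l a b : ℂ) (m : Matrix (Fin 3) (Fin 3) ℂ),
    ξ = opE 0 0 (Mlq l a b) 1 + opE 1 1 (Mlm l m) 1}

/-- The selfadjoint matrix `A_α ∈ M₄(ℂ)` with upper-right `2×2` block
`α = [[α₁₃,α₁₄],[α₂₃,α₂₄]]`, lower-left block `α*` and zero diagonal blocks. -/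
noncomputable def Moff (x13 x14 x23 x24 : ℂ) : Matrix (Fin 4) (Fin 4) ℂ :=
  !![0, 0, x13, x14;
     0, 0, x23, x24;
     conj x13, conj x23, 0, 0;
     conj x14, conj x24, 0, 0]

/-- The matrix `Δ ∈ M₄(ℂ)` with first row `(0,δ₁₂,δ₁₃,δ₁₄)`, second row
`(δ₂₁,δ₂₂,δ₂₃,δ₂₄)` and zero third and fourth rows. -/
noncomputable def Mdelta (d12 d13 d14 d21 d22 d23 d24 : ℂ) : Matrix (Fin 4) (Fin 4) ℂ :=
  !![0, d12, d13, d14;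
     d21, d22, d23, d24;
     0, 0, 0, 0;
     0, 0, 0, 0]

/-- The component `D₀ = A_α ⊗ e₁₁ ⊗ e₁₁ + A_β ⊗ e₁₁ ⊗ (1 − e₁₁) + Δ ⊗ e₁₂ ⊗ e₁₁
+ Δ* ⊗ e₂₁ ⊗ e₁₁` of the Dirac operator. -/
noncomputable def D0SM (a13 a14 a23 a24 b13 b14 b23 b24 d12 d13 d14 d21 d22 d23 d24 : ℂ) :
    HSM →ₗ[ℂ] HSM :=
  opE 0 0 (Moff a13 a14 a23 a24) E11
    + opE 0 0 (Moff b13 b14 b23 b24) (1 - E11)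
    + opE 0 1 (Mdelta d12 d13 d14 d21 d22 d23 d24) E11
    + opE 1 0 (Mdelta d12 d13 d14 d21 d22 d23 d24)ᴴ E11

/-- The component `D_R = e₁₁ ⊗ (Υ_R e₂₁ + Ῡ_R e₁₂) ⊗ e₁₁` of the Dirac operator. -/
noncomputable def DRSM (yR : ℂ) : HSM →ₗ[ℂ] HSM :=
  yR • opE 1 0 E11 E11 + (conj yR) • opE 0 1 E11 E11

/-- The full Dirac operator `D = D₀ + D₁ + D_R` with `D₁ = J D₀ J⁻¹`. -/
noncomputable def DSM
    (a13 a14 a23 a24 b13 b14 b23 b24 d12 d13 d14 d21 d22 d23 d24 yR : ℂ) :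
    HSM →ₗ[ℂ] HSM :=
  D0SM a13 a14 a23 a24 b13 b14 b23 b24 d12 d13 d14 d21 d22 d23 d24
    + conjJ JSM (D0SM a13 a14 a23 a24 b13 b14 b23 b24 d12 d13 d14 d21 d22 d23 d24)
    + DRSM yR

/-- The algebra `B = ℂ ⊕ M₃(ℂ) ⊕ M₄(ℂ) ⊕ M₄(ℂ)`, represented on `HSM` by
`π(λ,m,a,b) = (λ⊕m)⊗e₂₂⊗1 + a⊗e₁₁⊗e₁₁ + b⊗e₁₁⊗(1−e₁₁)`. -/
noncomputable def BSM : Set (HSM →ₗ[ℂ] HSM) :=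
  {ξ | ∃ (l : ℂ) (m : Matrix (Fin 3) (Fin 3) ℂ) (a b : Matrix (Fin 4) (Fin 4) ℂ),
    ξ = opE 1 1 (Mlm l m) 1 + opE 0 0 a E11 + opE 0 0 b (1 - E11)}

/-!
Write an operator on `H` as a block matrix: the outer index is the `M₂(ℂ)` factor, the middle
one the row index and the inner one the column index of `v, w ∈ M₄(ℂ)`. Conjugation by `J` turns
`α ⊗ e_{st} ⊗ β` into `βᵗ ⊗ e_{t̄s̄} ⊗ αᵗ` (where `1̄ = 2`, `2̄ = 1`), so `B` acts by left and
`B°` by right multiplications, which commute because `λ ⊕ m` commutes with `e₁₁`.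
Conversely an operator commuting with `B` is block diagonal, since `B` contains the projection
onto `v`; its `v`-block commutes with every `a ⊗ 1`, so it is `1 ⊗ c` with `c` commuting with
`e₁₁`, i.e. `c = λ ⊕ m`; its `w`-block commutes with `(ℂ ⊕ M₃(ℂ)) ⊗ 1`, so it is
`e₁₁ ⊗ a + (1 - e₁₁) ⊗ b`. Together these form an element of `B°`.
-/

open scoped Kronecker

lemma Matrix.map_single_smul {m n R A : Type*} [DecidableEq m] [DecidableEq n] [Zero R] [Zero A]
    [SMulWithZero R A] (i : m) (j : n) (r : R) (a : A) :
    (single i j r).map (· • a) = single i j (r • a) :=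
  map_single i j r (ZeroHom.mk (· • a) (zero_smul R a))

lemma Matrix.map_one_smul {n R A : Type*} [DecidableEq n] [Semiring R] [AddCommMonoid A]
    [Module R A] (a : A) : (1 : Matrix n n R).map (· • a) = diagonal fun _ => a := by
  rw [← diagonal_one, diagonal_map (zero_smul R a)]
  simp only [one_smul]

lemma Matrix.commute_apply_of_commute_single {n S : Type*} [Fintype n] [DecidableEq n]
    [Semiring S] {i : n} {N : S} {Y : Matrix n n S} (h : Commute (single i i N) Y) :
    Commute N (Y i i) := by
  simpa [commute_iff_eq] using ext_iff.mpr h i i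

lemma Matrix.eq_diagonal_of_commute_single_succ {n : ℕ} {S : Type*} [Semiring S]
    {W : Matrix (Fin (n + 2)) (Fin (n + 2)) S} (h0 : Commute (single 0 0 1) W)
    (hs : ∀ i k : Fin (n + 1), Commute (single i.succ k.succ 1) W) :
    W = diagonal (Fin.cons (W 0 0) fun _ => W 1 1) := by
  ext i j
  rcases eq_or_ne i j with rfl | hij
  · cases i using Fin.cases
    · rfl
    · simpa using diag_eq_of_commute_single (hs _ 0)
  · rw [diagonal_apply_ne _ hij]
    cases j using Fin.cases with
    | zero => exact col_eq_zero_of_commute_single h0 hij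
    | succ j => exact col_eq_zero_of_commute_single (hs j j) hij

noncomputable abbrev toMat :
    (HSM →ₗ[ℂ] HSM) ≃⋆ₐ[ℂ] Matrix (Fin 2 × Fin 4 × Fin 4) (Fin 2 × Fin 4 × Fin 4) ℂ :=
  LinearMap.toMatrixOrthonormal (EuclideanSpace.basisFun _ ℂ)

lemma toMat_apply (f : HSM →ₗ[ℂ] HSM) (p q : Fin 2 × Fin 4 × Fin 4) :
    toMat f p q = f (EuclideanSpace.single q 1) p := by
  simp [LinearMap.toMatrixOrthonormal_apply_apply, EuclideanSpace.inner_single_left]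

lemma opE_apply (s t : Fin 2) (α β : Matrix (Fin 4) (Fin 4) ℂ) (x : HSM)
    (p : Fin 2 × Fin 4 × Fin 4) :
    opE s t α β x p = if p.1 = s then ∑ k, ∑ l, α p.2.1 k * β p.2.2 l * x (t, k, l) else 0 := rfl

lemma toMat_opE (s t : Fin 2) (α β : Matrix (Fin 4) (Fin 4) ℂ) :
    toMat (opE s t α β) = single s t 1 ⊗ₖ (α ⊗ₖ β) := by
  ext ⟨u, i, j⟩ ⟨w, k, l⟩
  simp only [toMat_apply, opE_apply, PiLp.single_apply, kronecker_apply,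
    single_apply, Prod.mk.injEq, mul_ite, mul_one, mul_zero, ite_and,
    Finset.sum_ite_irrel, Finset.sum_ite_eq', Finset.mem_univ, if_true, Finset.sum_const_zero]
  rcases eq_or_ne u s with rfl | h
  · simp
  · simp [h, Ne.symm h]

lemma opE_mul_opE (s t u : Fin 2) (α β α' β' : Matrix (Fin 4) (Fin 4) ℂ) :
    opE s t α β * opE t u α' β' = opE s u (α * α') (β * β') := by
  apply EquivLike.injective toMat
  rw [map_mul, toMat_opE, toMat_opE, toMat_opE, ← mul_kronecker_mul,
    ← mul_kronecker_mul, single_mul_single_same, one_mul]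

lemma opE_mul_opE_of_ne {s t t' u : Fin 2} (h : t ≠ t') (α β α' β' : Matrix (Fin 4) (Fin 4) ℂ) :
    opE s t α β * opE t' u α' β' = 0 := by
  apply EquivLike.injective toMat
  rw [map_mul, toMat_opE, toMat_opE, map_zero, ← mul_kronecker_mul,
    single_mul_single_of_ne _ _ _ _ h, zero_kronecker]

lemma star_opE (s t : Fin 2) (α β : Matrix (Fin 4) (Fin 4) ℂ) :
    star (opE s t α β) = opE t s αᴴ βᴴ := by
  apply EquivLike.injective toMat
  rw [map_star, toMat_opE, toMat_opE, star_eq_conjTranspose,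
    conjTranspose_kronecker, conjTranspose_kronecker, conjTranspose_single,
    star_one]

lemma opE_zero_left (s t : Fin 2) (β : Matrix (Fin 4) (Fin 4) ℂ) : opE s t 0 β = 0 := by
  apply EquivLike.injective toMat
  rw [toMat_opE, zero_kronecker, kronecker_zero, map_zero]

lemma opE_add_right (s t : Fin 2) (α β β' : Matrix (Fin 4) (Fin 4) ℂ) :
    opE s t α (β + β') = opE s t α β + opE s t α β' := by
  apply EquivLike.injective toMat
  rw [map_add, toMat_opE, toMat_opE, toMat_opE, kronecker_add, kronecker_add]

lemma JSM_apply (x : HSM) (p : Fin 2 × Fin 4 × Fin 4) :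
    JSM x p = conj (x (1 - p.1, p.2.2, p.2.1)) := rfl

lemma JSM_symm_apply (x : HSM) (p : Fin 2 × Fin 4 × Fin 4) :
    JSM.symm x p = conj (x (1 - p.1, p.2.2, p.2.1)) := rfl

lemma sharp_apply (ξ : HSM →ₗ[ℂ] HSM) (x : HSM) : sharp JSM ξ x = JSM (star ξ (JSM.symm x)) := rfl

lemma sharp_add (ξ ζ : HSM →ₗ[ℂ] HSM) : sharp JSM (ξ + ζ) = sharp JSM ξ + sharp JSM ζ := by
  ext x p
  simp [sharp_apply, star_add]

lemma sharp_opE (s t : Fin 2) (α β : Matrix (Fin 4) (Fin 4) ℂ) :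
    sharp JSM (opE s t α β) = opE (1 - t) (1 - s) βᵀ αᵀ := by
  ext x p
  have hflip : 1 - p.1 = t ↔ p.1 = 1 - t := by omega
  rw [sharp_apply, star_opE, JSM_apply]
  simp only [opE_apply, JSM_symm_apply, conjTranspose_apply, transpose_apply, hflip]
  split_ifs
  · simp only [map_sum, map_mul, Complex.conj_conj, RCLike.star_def]
    rw [Finset.sum_comm]
    exact Finset.sum_congr rfl fun k _ => Finset.sum_congr rfl fun l _ => by ring
  · exact map_zero _

lemma E11_eq_single : E11 = single 0 0 1 := by
  ext i j; fin_cases i <;> fin_cases j <;> rfl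

section Mlm

variable (l : ℂ) (m : Matrix (Fin 3) (Fin 3) ℂ)

@[simp] lemma Mlm_zero_zero_apply : Mlm l m 0 0 = l := rfl

@[simp] lemma Mlm_zero_succ_apply (k : Fin 3) : Mlm l m 0 k.succ = 0 := by fin_cases k <;> rfl

@[simp] lemma Mlm_succ_zero_apply (i : Fin 3) : Mlm l m i.succ 0 = 0 := by fin_cases i <;> rfl

@[simp] lemma Mlm_succ_succ_apply (i k : Fin 3) : Mlm l m i.succ k.succ = m i k := by
  fin_cases i <;> fin_cases k <;> rfl

lemma Mlm_transpose : (Mlm l m)ᵀ = Mlm l mᵀ := by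
  ext i j; cases i using Fin.cases <;> cases j using Fin.cases <;> simp

lemma Mlm_commute_E11 : Commute (Mlm l m) E11 := by
  rw [E11_eq_single]
  ext i j
  cases i using Fin.cases <;> cases j using Fin.cases <;>
    simp [mul_apply, single_apply, (Fin.succ_ne_zero _).symm]

end Mlm

lemma Mlm_zero_zero : Mlm 0 0 = 0 := by
  ext i j; cases i using Fin.cases <;> cases j using Fin.cases <;> simp

lemma Mlm_one_zero : Mlm 1 0 = single 0 0 1 := by
  ext i j; cases i using Fin.cases <;> cases j using Fin.cases <;> simp [(Fin.succ_ne_zero _).symm]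

lemma Mlm_zero_single (i k : Fin 3) :
    Mlm 0 (single i k 1) = single i.succ k.succ 1 := by
  ext a b; cases a using Fin.cases <;> cases b using Fin.cases <;> simp [single_apply]

lemma eq_Mlm_of_commute_E11 {C : Matrix (Fin 4) (Fin 4) ℂ} (h : Commute E11 C) :
    C = Mlm (C 0 0) (C.submatrix Fin.succ Fin.succ) := by
  rw [E11_eq_single] at h
  ext i j
  cases i using Fin.cases <;> cases j using Fin.cases
  · rfl
  · simpa using row_eq_zero_of_commute_single h (Fin.succ_ne_zero _)
  · simpa using col_eq_zero_of_commute_single h (Fin.succ_ne_zero _)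
  · simp

noncomputable def piB (l : ℂ) (m : Matrix (Fin 3) (Fin 3) ℂ) (a b : Matrix (Fin 4) (Fin 4) ℂ) :
    HSM →ₗ[ℂ] HSM :=
  opE 1 1 (Mlm l m) 1 + opE 0 0 a E11 + opE 0 0 b (1 - E11)

noncomputable def piBOpp (l : ℂ) (m : Matrix (Fin 3) (Fin 3) ℂ) (a b : Matrix (Fin 4) (Fin 4) ℂ) :
    HSM →ₗ[ℂ] HSM :=
  opE 0 0 1 (Mlm l m) + opE 1 1 E11 a + opE 1 1 (1 - E11) b

lemma piB_mem_BSM (l : ℂ) (m : Matrix (Fin 3) (Fin 3) ℂ) (a b : Matrix (Fin 4) (Fin 4) ℂ) :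
    piB l m a b ∈ BSM :=
  ⟨l, m, a, b, rfl⟩

lemma sharp_piB (l : ℂ) (m : Matrix (Fin 3) (Fin 3) ℂ) (a b : Matrix (Fin 4) (Fin 4) ℂ) :
    sharp JSM (piB l m a b) = piBOpp l mᵀ aᵀ bᵀ := by
  have hE11 : E11ᵀ = E11 := by rw [E11_eq_single, transpose_single]
  simp only [piB, piBOpp, sharp_add, sharp_opE, transpose_one, transpose_sub,
    Mlm_transpose, hE11]
  rfl

lemma piB_commute_piBOpp (l : ℂ) (m : Matrix (Fin 3) (Fin 3) ℂ) (a b : Matrix (Fin 4) (Fin 4) ℂ)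
    (l' : ℂ) (m' : Matrix (Fin 3) (Fin 3) ℂ) (a' b' : Matrix (Fin 4) (Fin 4) ℂ) :
    Commute (piB l m a b) (piBOpp l' m' a' b') := by
  have h1 := Mlm_commute_E11 l m
  have h2 := Mlm_commute_E11 l' m'
  simp only [Commute, SemiconjBy, piB, piBOpp, add_mul, mul_add, opE_mul_opE,
    opE_mul_opE_of_ne zero_ne_one, opE_mul_opE_of_ne one_ne_zero, mul_one, one_mul, h1.eq, h2.eq,
    mul_sub, sub_mul, add_zero, zero_add]
  abel

lemma opE_left_mem_BSM (a : Matrix (Fin 4) (Fin 4) ℂ) : opE 0 0 a 1 ∈ BSM := by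
  convert piB_mem_BSM 0 0 a a using 1
  rw [piB, Mlm_zero_zero, opE_zero_left, zero_add, ← opE_add_right, add_sub_cancel]

lemma opE_E11_mem_BSM : opE 0 0 1 E11 ∈ BSM := by
  convert piB_mem_BSM 0 0 1 0 using 1
  rw [piB, Mlm_zero_zero, opE_zero_left, opE_zero_left, zero_add, add_zero]

lemma opE_Mlm_mem_BSM (l : ℂ) (m : Matrix (Fin 3) (Fin 3) ℂ) : opE 1 1 (Mlm l m) 1 ∈ BSM := by
  convert piB_mem_BSM l m 0 0 using 1
  rw [piB, opE_zero_left, opE_zero_left, add_zero, add_zero]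

noncomputable def blockMat : (HSM →ₗ[ℂ] HSM) ≃+*
    Matrix (Fin 2) (Fin 2) (Matrix (Fin 4) (Fin 4) (Matrix (Fin 4) (Fin 4) ℂ)) :=
  toMat.toRingEquiv.trans
    ((compRingEquiv _ _ ℂ).symm.trans (compRingEquiv _ _ ℂ).symm.mapMatrix)

lemma blockMat_apply (f : HSM →ₗ[ℂ] HSM) (s t : Fin 2) (i k j l : Fin 4) :
    blockMat f s t i k j l = toMat f (s, i, j) (t, k, l) := rfl

lemma blockMat_opE (s t : Fin 2) (α β : Matrix (Fin 4) (Fin 4) ℂ) :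
    blockMat (opE s t α β) = single s t (α.map (· • β)) := by
  ext u w i k j l
  rw [blockMat_apply, toMat_opE]
  by_cases h : s = u ∧ t = w <;> simp [h]

lemma blockMat_piBOpp (l : ℂ) (m : Matrix (Fin 3) (Fin 3) ℂ) (a b : Matrix (Fin 4) (Fin 4) ℂ) :
    blockMat (piBOpp l m a b) =
      single 0 0 (scalar (Fin 4) (Mlm l m)) + single 1 1 (diagonal (Fin.cons a fun _ => b)) := by
  have hE : E11.map (· • a) + (1 - E11).map (· • b) = diagonal (Fin.cons a fun _ => b) := by
    ext i j : 1
    cases i using Fin.cases <;> cases j using Fin.cases <;>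
      simp [E11_eq_single, one_apply, diagonal_apply, (Fin.succ_ne_zero _).symm]
  simp only [piBOpp, map_add, blockMat_opE, add_assoc, ← single_add, hE, map_one_smul,
    scalar_apply]

lemma commutant_BSM_subset_opp {η : HSM →ₗ[ℂ] HSM} (hη : η ∈ commutant BSM) : η ∈ opp BSM := by
  set Y := blockMat η
  have hY {s : Fin 2} {α β : Matrix (Fin 4) (Fin 4) ℂ} (h : opE s s α β ∈ BSM) :
      Commute (single s s (α.map (· • β))) Y := by
    rw [← blockMat_opE]
    exact (show Commute η _ from hη _ h).symm.map blockMat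
  have hProj : Commute (single 0 0 1) Y := by
    simpa [map_one_smul] using hY (opE_left_mem_BSM 1)
  obtain ⟨C, hC⟩ : Y 0 0 ∈ Set.range (scalar (Fin 4)) :=
    mem_range_scalar_of_commute_single fun i k _ => by
      simpa [map_single_smul] using
        commute_apply_of_commute_single (hY (opE_left_mem_BSM (single i k 1)))
  have hCE : Commute E11 C := by
    have h := commute_apply_of_commute_single (hY opE_E11_mem_BSM)
    rw [map_one_smul, ← hC, ← scalar_apply] at h
    exact (scalar_inj (n := Fin 4)).mp (by simpa using h.eq)
  have hW : Y 1 1 = diagonal (Fin.cons (Y 1 1 0 0) fun _ => Y 1 1 1 1) := by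
    refine eq_diagonal_of_commute_single_succ ?_ fun i k => ?_
    · simpa [Mlm_one_zero, map_single_smul] using
        commute_apply_of_commute_single (hY (opE_Mlm_mem_BSM 1 0))
    · simpa [Mlm_zero_single, map_single_smul] using
        commute_apply_of_commute_single (hY (opE_Mlm_mem_BSM 0 (single i k 1)))
  refine ⟨piB (C 0 0) (C.submatrix Fin.succ Fin.succ)ᵀ (Y 1 1 0 0)ᵀ (Y 1 1 1 1)ᵀ,
    piB_mem_BSM .., ?_⟩
  apply EquivLike.injective blockMat
  rw [sharp_piB, blockMat_piBOpp, transpose_transpose, transpose_transpose,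
    transpose_transpose, ← eq_Mlm_of_commute_E11 hCE, hC, ← hW]
  ext s t : 1
  fin_cases s <;> fin_cases t
  · simp [Y]
  · simpa using (row_eq_zero_of_commute_single hProj one_ne_zero).symm
  · simpa using (col_eq_zero_of_commute_single hProj one_ne_zero).symm
  · simp [Y]

lemma commute_sharp_of_mem_BSM {ξ η : HSM →ₗ[ℂ] HSM} (hξ : ξ ∈ BSM) (hη : η ∈ BSM) :
    Commute ξ (sharp JSM η) := by
  obtain ⟨l, m, a, b, rfl⟩ := hξ
  obtain ⟨l', m', a', b', rfl⟩ := hη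
  exact (sharp_piB l' m' a' b').symm ▸ piB_commute_piBOpp l m a b l' m'ᵀ a'ᵀ b'ᵀ

/-- The algebra `B = ℂ ⊕ M₃(ℂ) ⊕ M₄(ℂ) ⊕ M₄(ℂ)` (represented as
above) and `B°` commute, and in fact `B' = B°`. -/
theorem BSM_commutant_eq_opp :
    (∀ ξ ∈ BSM, ∀ η ∈ BSM, ξ * sharp JSM η = sharp JSM η * ξ) ∧
    commutant BSM = opp BSM := by
  refine ⟨fun ξ hξ η hη => commute_sharp_of_mem_BSM hξ hη, ?_⟩
  refine Set.Subset.antisymm (fun η hη => commutant_BSM_subset_opp hη) ?_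
  rintro _ ⟨ξ, hξ, rfl⟩ ζ hζ
  exact (commute_sharp_of_mem_BSM hζ hξ).eq.symm
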